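/- Let m ≥ 4 be even and θ_1, ..., θ_m ∈ (0, π) dihedral angles summing to 2π around an interior edge, with sin(θ_1 + θ_2) ≠ 0 and sin(θ_1 + θ_m) having the same sign as sin(θ_1 + θ_2) (e.g., both angle sums in (0, π)). Define β = (cot θ_1 + cot θ_m)/(cot θ_1 + cot θ_2) = sin θ_2 sin(θ_1 + θ_m) / (sin θ_m sin(θ_1 + θ_2)). Then β > 0, and there exists a normal-continuous piecewise-constant symmetric tensor field T on the patch with n_1^T T n_1 = 1, n_2^T T n_2 = β, and n_j^T T n_j = 0 for j = 3, ..., m; explicitly T n_1 = n_1, T n_2 = β n_2 + (1-β) cot(θ_1) t_2, T n_3 = cot(θ_m) t_3, and T n_j = (-1)^{j-3} cot(θ_m) t_j for j ≥ 3. -/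

import Mathlib

/-!
Put `T_j = a_j n_j n_jᵀ + b_j (n_j t_jᵀ + t_j n_jᵀ) + g_j t_j t_jᵀ` on face `j`, so that
`T_j n_j = a_j n_j + b_j t_j`. Expressing `n_{j+1}, t_{j+1}` in the frame `(n_j, t_j)`, normal
continuity across the edge between faces `j` and `j + 1` splits into an `n_j`-component,
`b_j + b_{j+1} = (a_j - a_{j+1}) cot θ_j`, and a `t_j`-component, which fixes `g_j`.
Indexing faces from `0`, take `a = (1, β, 0, …, 0)` and
`b = (0, (1 - β) cot θ_0, cot θ_{m-1}, -cot θ_{m-1}, …)`: the relation holds at the first edge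
trivially, at the second by the definition of `β`, in the middle by the alternation of signs, and at
the closing edge because `m` is even. Positivity of `β` is the sign hypothesis.
-/

open Matrix

def frameTensor {ι : Type*} (a b g : ℝ) (u v : ι → ℝ) : Matrix ι ι ℝ :=
  a • vecMulVec u u + b • (vecMulVec u v + vecMulVec v u) + g • vecMulVec v v

section frameTensor

variable {ι : Type*} (a b g : ℝ) {u v : ι → ℝ}

theorem frameTensor_isSymm : (frameTensor a b g u v).IsSymm := by
  simp only [IsSymm, frameTensor, transpose_add, transpose_smul, transpose_vecMulVec]
  rw [add_comm (vecMulVec v u)]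

variable [Fintype ι]

theorem frameTensor_mulVec (x : ι → ℝ) :
    frameTensor a b g u v *ᵥ x =
      (a * (u ⬝ᵥ x) + b * (v ⬝ᵥ x)) • u + (b * (u ⬝ᵥ x) + g * (v ⬝ᵥ x)) • v := by
  simp only [frameTensor, add_mulVec, smul_mulVec, vecMulVec_mulVec, op_smul_eq_smul]
  module

theorem frameTensor_mulVec_left (hu : u ⬝ᵥ u = 1) (huv : u ⬝ᵥ v = 0) :
    frameTensor a b g u v *ᵥ u = a • u + b • v := by
  rw [frameTensor_mulVec, hu, dotProduct_comm, huv]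
  module

theorem frameTensor_mulVec_rotate (hu : u ⬝ᵥ u = 1) (hv : v ⬝ᵥ v = 1) (huv : u ⬝ᵥ v = 0)
    (c s : ℝ) :
    frameTensor a b g u v *ᵥ (c • u - s • v) = (a * c - b * s) • u + (b * c - g * s) • v := by
  rw [frameTensor_mulVec]
  simp only [dotProduct_sub, dotProduct_smul, hu, hv, huv, dotProduct_comm v u, smul_eq_mul]
  module

end frameTensor

theorem rotated_tangent_eq {V : Type*} [AddCommGroup V] [Module ℝ V] {θ : ℝ}
    (hθ : Real.sin θ ≠ 0) {n t n' t' : V} (h₁ : n' = Real.cos θ • n - Real.sin θ • t)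
    (h₂ : n = Real.cos θ • n' + Real.sin θ • t') :
    t' = Real.sin θ • n + Real.cos θ • t := by
  apply smul_right_injective V hθ
  linear_combination (norm := module) -h₂ - Real.cos θ • h₁ - (Real.sin_sq_add_cos_sq θ) • n

theorem exists_normalContinuous_field_of_cot_relation {ι : Type*} [Fintype ι] {m : ℕ} [NeZero m]
    (θ : Fin m → ℝ) (hsin : ∀ j, Real.sin (θ j) ≠ 0) (n t : Fin m → ι → ℝ)
    (hn : ∀ j, n j ⬝ᵥ n j = 1) (ht : ∀ j, t j ⬝ᵥ t j = 1) (hnt : ∀ j, n j ⬝ᵥ t j = 0)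
    (hrot₁ : ∀ j, n (j + 1) = Real.cos (θ j) • n j - Real.sin (θ j) • t j)
    (hrot₂ : ∀ j, n j = Real.cos (θ j) • n (j + 1) + Real.sin (θ j) • t (j + 1))
    (a b : Fin m → ℝ) (hab : ∀ j, b j + b (j + 1) = (a j - a (j + 1)) * Real.cot (θ j)) :
    ∃ T : Fin m → Matrix ι ι ℝ, (∀ j, (T j).IsSymm) ∧
      (∀ j, T j *ᵥ n (j + 1) = T (j + 1) *ᵥ n (j + 1)) ∧
      ∀ j, T j *ᵥ n j = a j • n j + b j • t j := by
  refine ⟨fun j => frameTensor (a j) (b j) (a (j + 1) + (b j - b (j + 1)) * Real.cot (θ j))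
    (n j) (t j), fun j => frameTensor_isSymm .., fun j => ?_,
    fun j => frameTensor_mulVec_left _ _ _ (hn j) (hnt j)⟩
  have hcot : Real.cot (θ j) * Real.sin (θ j) = Real.cos (θ j) := by
    rw [Real.cot_eq_cos_div_sin, div_mul_cancel₀ _ (hsin j)]
  rw [frameTensor_mulVec_left _ _ _ (hn _) (hnt _),
    rotated_tangent_eq (hsin j) (hrot₁ j) (hrot₂ j), hrot₁ j,
    frameTensor_mulVec_rotate _ _ _ (hn j) (ht j) (hnt j)]
  linear_combination (norm := module) -(Real.sin (θ j) * hab j + (a j - a (j + 1)) * hcot) • n j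
    - ((b j - b (j + 1)) * hcot) • t j

theorem Fin.val_one_of_one_lt {m : ℕ} [NeZero m] (hm : 1 < m) : ((1 : Fin m) : ℕ) = 1 := by
  rw [Fin.val_one', Nat.mod_eq_of_lt hm]

def normalCoeff (β : ℝ) : ℕ → ℝ
  | 0 => 1
  | 1 => β
  | _ + 2 => 0

def shearCoeff (β c₀ c : ℝ) : ℕ → ℝ
  | 0 => 0
  | 1 => (1 - β) * c₀
  | k + 2 => (-1) ^ k * c

theorem shearCoeff_add_succ {m : ℕ} [NeZero m] (hm : 4 ≤ m) (hme : Even m) (θ : Fin m → ℝ)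
    {β : ℝ} (hβ : β * (Real.cot (θ 0) + Real.cot (θ 1)) = Real.cot (θ 0) + Real.cot (θ (-1)))
    (j : Fin m) :
    shearCoeff β (Real.cot (θ 0)) (Real.cot (θ (-1))) j +
        shearCoeff β (Real.cot (θ 0)) (Real.cot (θ (-1))) (j + 1 : Fin m) =
      (normalCoeff β j - normalCoeff β (j + 1 : Fin m)) * Real.cot (θ j) := by
  have hval_one : ((1 : Fin m) : ℕ) = 1 := Fin.val_one_of_one_lt (by omega)
  by_cases hj : (j : ℕ) + 1 < m
  · rw [Fin.val_add_one_of_lt' hj]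
    match hk : (j : ℕ) with
    | 0 =>
      obtain rfl : j = 0 := Fin.ext hk
      simp only [shearCoeff, normalCoeff]
      ring
    | 1 =>
      obtain rfl : j = 1 := Fin.ext (hk.trans hval_one.symm)
      simp only [shearCoeff, normalCoeff]
      linear_combination -hβ
    | k + 2 =>
      simp only [shearCoeff, normalCoeff, pow_succ]
      ring
  · have hval_neg_one : ((-1 : Fin m) : ℕ) = m - 4 + 1 + 2 := by
      rw [Fin.val_neg', hval_one, Nat.mod_eq_of_lt (by omega)]
      omega
    obtain rfl : j = -1 := Fin.ext (by omega)
    rw [neg_add_cancel, hval_neg_one, Fin.val_zero]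
    simp only [shearCoeff, normalCoeff, pow_succ, (hme.tsub (by decide : Even 4)).neg_one_pow]
    ring

theorem stmt10_general (m : ℕ) [NeZero m] (hm : 4 ≤ m) (hme : Even m)
    (θ : Fin m → ℝ) (hθ : ∀ j, θ j ∈ Set.Ioo 0 Real.pi)
    (n t : Fin m → Fin 3 → ℝ)
    (hn : ∀ j, n j ⬝ᵥ n j = 1) (htj : ∀ j, t j ⬝ᵥ t j = 1)
    (hnt : ∀ j, n j ⬝ᵥ t j = 0)
    (hrot1 : ∀ j, n (j + 1) = Real.cos (θ j) • n j - Real.sin (θ j) • t j)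
    (hrot2 : ∀ j, n j = Real.cos (θ j) • n (j + 1) + Real.sin (θ j) • t (j + 1))
    (hns : Real.cos (θ 0) / Real.sin (θ 0) + Real.cos (θ 1) / Real.sin (θ 1) ≠ 0)
    (hsign : 0 < Real.sin (θ 0 + θ (-1)) * Real.sin (θ 0 + θ 1))
    (β : ℝ)
    (hβ : β = (Real.cos (θ 0) / Real.sin (θ 0) + Real.cos (θ (-1)) / Real.sin (θ (-1))) /
        (Real.cos (θ 0) / Real.sin (θ 0) + Real.cos (θ 1) / Real.sin (θ 1)))
    (hβ' : β = Real.sin (θ 1) * Real.sin (θ 0 + θ (-1)) /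
        (Real.sin (θ (-1)) * Real.sin (θ 0 + θ 1))) :
    0 < β ∧
    ∃ T : Fin m → Matrix (Fin 3) (Fin 3) ℝ,
      (∀ j, (T j).IsSymm) ∧
      (∀ j, T j *ᵥ n (j + 1) = T (j + 1) *ᵥ n (j + 1)) ∧
      T 0 *ᵥ n 0 = n 0 ∧
      T 1 *ᵥ n 1 = β • n 1 + ((1 - β) * (Real.cos (θ 0) / Real.sin (θ 0))) • t 1 ∧
      (∀ j : Fin m, 2 ≤ (j : ℕ) →
        T j *ᵥ n j = ((-1 : ℝ) ^ ((j : ℕ) - 2) * (Real.cos (θ (-1)) / Real.sin (θ (-1)))) • t j) ∧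
      n 0 ⬝ᵥ (T 0 *ᵥ n 0) = 1 ∧
      n 1 ⬝ᵥ (T 1 *ᵥ n 1) = β ∧
      (∀ j : Fin m, 2 ≤ (j : ℕ) → n j ⬝ᵥ (T j *ᵥ n j) = 0) := by
  have hsin : ∀ j, 0 < Real.sin (θ j) := fun j => Real.sin_pos_of_pos_of_lt_pi (hθ j).1 (hθ j).2
  have hβ_pos : 0 < β := by
    rw [hβ', mul_div_mul_comm]
    exact mul_pos (div_pos (hsin 1) (hsin (-1))) (div_pos_iff.2 (mul_pos_iff.1 hsign))
  have hβ_cot : β * (Real.cot (θ 0) + Real.cot (θ 1)) = Real.cot (θ 0) + Real.cot (θ (-1)) := by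
    simp only [Real.cot_eq_cos_div_sin]
    rw [hβ, div_mul_cancel₀ _ hns]
  obtain ⟨T, hsym, hcont, hTn⟩ := exists_normalContinuous_field_of_cot_relation θ
    (fun j => (hsin j).ne') n t hn htj hnt hrot1 hrot2 _ _ (shearCoeff_add_succ hm hme θ hβ_cot)
  have hquad : ∀ j, n j ⬝ᵥ (T j *ᵥ n j) = normalCoeff β j := fun j => by
    rw [hTn, dotProduct_add, dotProduct_smul, dotProduct_smul, hn, hnt, smul_eq_mul, smul_eq_mul]
    ring
  have hval_one : ((1 : Fin m) : ℕ) = 1 := Fin.val_one_of_one_lt (by omega)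
  refine ⟨hβ_pos, T, hsym, hcont, ?_, ?_, fun j hj => ?_, ?_, ?_, fun j hj => ?_⟩
  · simp [hTn, normalCoeff, shearCoeff]
  · rw [hTn, hval_one, normalCoeff, shearCoeff, Real.cot_eq_cos_div_sin]
  · obtain ⟨k, hk⟩ := Nat.exists_eq_add_of_le' hj
    simp [hTn, hk, normalCoeff, shearCoeff, Real.cot_eq_cos_div_sin]
  · simp [hquad, normalCoeff]
  · rw [hquad, hval_one, normalCoeff]
  · obtain ⟨k, hk⟩ := Nat.exists_eq_add_of_le' hj
    simp [hquad, hk, normalCoeff]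

/-- Even non-singular case: with
`β = (cot θ_1 + cot θ_m)/(cot θ_1 + cot θ_2) = sin θ_2 sin(θ_1+θ_m)/(sin θ_m sin(θ_1+θ_2)) > 0`,
there is a normal-continuous piecewise-constant symmetric tensor field `T` with
`n_1ᵀ T n_1 = 1`, `n_2ᵀ T n_2 = β`, `n_jᵀ T n_j = 0` for `j ≥ 3`, given explicitly by
`T n_1 = n_1`, `T n_2 = β n_2 + (1-β) cot(θ_1) t_2`, `T n_j = (-1)^{j-3} cot(θ_m) t_j`. -/
theorem stmt10 (m : ℕ) [NeZero m] (hm : 4 ≤ m) (hme : Even m)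
    (θ : Fin m → ℝ) (hθ : ∀ j, θ j ∈ Set.Ioo 0 Real.pi)
    (hsum : ∑ j, θ j = 2 * Real.pi)
    (n t : Fin m → Fin 3 → ℝ)
    (hn : ∀ j, n j ⬝ᵥ n j = 1) (htj : ∀ j, t j ⬝ᵥ t j = 1)
    (hnt : ∀ j, n j ⬝ᵥ t j = 0)
    (hrot1 : ∀ j, n (j + 1) = Real.cos (θ j) • n j - Real.sin (θ j) • t j)
    (hrot2 : ∀ j, n j = Real.cos (θ j) • n (j + 1) + Real.sin (θ j) • t (j + 1))
    (hns : Real.cos (θ 0) / Real.sin (θ 0) + Real.cos (θ 1) / Real.sin (θ 1) ≠ 0)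
    (hsin12 : Real.sin (θ 0 + θ 1) ≠ 0)
    (hsign : 0 < Real.sin (θ 0 + θ (-1)) * Real.sin (θ 0 + θ 1))
    (β : ℝ)
    (hβ : β = (Real.cos (θ 0) / Real.sin (θ 0) + Real.cos (θ (-1)) / Real.sin (θ (-1))) /
        (Real.cos (θ 0) / Real.sin (θ 0) + Real.cos (θ 1) / Real.sin (θ 1)))
    (hβ' : β = Real.sin (θ 1) * Real.sin (θ 0 + θ (-1)) /
        (Real.sin (θ (-1)) * Real.sin (θ 0 + θ 1))) :
    0 < β ∧
    ∃ T : Fin m → Matrix (Fin 3) (Fin 3) ℝ,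
      (∀ j, (T j).IsSymm) ∧
      (∀ j, T j *ᵥ n (j + 1) = T (j + 1) *ᵥ n (j + 1)) ∧
      T 0 *ᵥ n 0 = n 0 ∧
      T 1 *ᵥ n 1 = β • n 1 + ((1 - β) * (Real.cos (θ 0) / Real.sin (θ 0))) • t 1 ∧
      (∀ j : Fin m, 2 ≤ (j : ℕ) →
        T j *ᵥ n j = ((-1 : ℝ) ^ ((j : ℕ) - 2) * (Real.cos (θ (-1)) / Real.sin (θ (-1)))) • t j) ∧
      n 0 ⬝ᵥ (T 0 *ᵥ n 0) = 1 ∧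
      n 1 ⬝ᵥ (T 1 *ᵥ n 1) = β ∧
      (∀ j : Fin m, 2 ≤ (j : ℕ) → n j ⬝ᵥ (T j *ᵥ n j) = 0) :=
  stmt10_general m hm hme θ hθ n t hn htj hnt hrot1 hrot2 hns hsign β hβ hβ'
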